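/- For r > 1 and all real x ≥ 1, the function f(x) = x(1 + 1/x)^r satisfies f(x+1) − f(x) ≤ 1. -/

import Mathlib

/-!
With `s = 1 / y`, the quantity `y * ((1 + 1 / y) ^ r - 1) = ((1 + s) ^ r - 1) / s` is the slope of
the secant of the convex function `u ↦ u ^ r` between `1` and `1 + s`. Secant slopes of a convex
function grow with `s`, so this quantity decreases in `y`; comparing `y = x + 1` with `y = x` is
exactly the claimed inequality.
-/

open Set

theorem rpow_one_add_secant_mono {r : ℝ} (hr : 1 ≤ r) {s t : ℝ} (hs : 0 < s) (hst : s ≤ t) :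
    ((1 + s) ^ r - 1) / s ≤ ((1 + t) ^ r - 1) / t := by
  have key := (convexOn_rpow hr).secant_mono (a := 1) (x := 1 + s) (y := 1 + t)
    (by norm_num) (by simp only [mem_Ici]; linarith) (by simp only [mem_Ici]; linarith)
    (by linarith) (by linarith) (by linarith)
  simpa only [Real.one_rpow, add_sub_cancel_left] using key

theorem mul_one_add_inv_rpow_sub_one_antitoneOn {r : ℝ} (hr : 1 ≤ r) :
    AntitoneOn (fun y : ℝ => y * ((1 + 1 / y) ^ r - 1)) (Ioi 0) := by
  intro x (hx : 0 < x) y (hy : 0 < y) hxy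
  have slope := rpow_one_add_secant_mono hr (one_div_pos.mpr hy) (one_div_le_one_div_of_le hx hxy)
  rwa [div_div_eq_mul_div, div_div_eq_mul_div, div_one, div_one, mul_comm, mul_comm _ x] at slope

theorem f_difference_le_one (r : ℝ) (hr : 1 < r) (x : ℝ) (hx : 1 ≤ x) :
    (x + 1) * (1 + 1 / (x + 1)) ^ r - x * (1 + 1 / x) ^ r ≤ 1 := by
  have hx₀ : (0 : ℝ) < x := by linarith
  have h := mul_one_add_inv_rpow_sub_one_antitoneOn hr.le (mem_Ioi.mpr hx₀)
    (mem_Ioi.mpr (by linarith : (0 : ℝ) < x + 1)) (by linarith)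
  simp only at h
  linarith
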